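/- Let V = p₁(x₁³+x₂³+x₃³) − 3p₂x₁x₂x₃ ∈ ℂ[p₁,p₂,x₁,x₂,x₃] and let J be the ideal generated by the five partial derivatives of V. Then in the quotient ring ℂ[p₁,p₂,x₁,x₂,x₃]/J one has x₁³ + x₂³ + x₃³ = 0 and x₁x₂x₃ = 0, while the classes of x₁³ and x₂³ are linearly independent over ℂ. -/

import Mathlib

open MvPolynomial

/-- `V = p₁(x₁³+x₂³+x₃³) − 3p₂x₁x₂x₃`, with variables `p₁,p₂,x₁,x₂,x₃` indexed by `0,…,4`. -/
noncomputable def LT_V : MvPolynomial (Fin 5) ℂ :=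
  X 0 * (X 2 ^ 3 + X 3 ^ 3 + X 4 ^ 3) - 3 * (X 1 * (X 2 * X 3 * X 4))

/-- The Jacobi ideal of `V`, generated by its five partial derivatives. -/
noncomputable def LT_V_JacobiIdeal : Ideal (MvPolynomial (Fin 5) ℂ) :=
  Ideal.span (Set.range fun i : Fin 5 => pderiv i LT_V)

local notation "mk" => Ideal.Quotient.mk LT_V_JacobiIdeal

lemma pd3 (i : Fin 5) : pderiv i (3 : MvPolynomial (Fin 5) ℂ) = 0 := by
  rw [← map_ofNat (C : ℂ →+* MvPolynomial (Fin 5) ℂ) 3, pderiv_C]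

lemma hd0 : pderiv (0 : Fin 5) LT_V = X 2 ^ 3 + X 3 ^ 3 + X 4 ^ 3 := by
  simp [LT_V, pderiv_X, Pi.single_apply, pd3]

lemma hd1 : pderiv (1 : Fin 5) LT_V = -(3 * (X 2 * X 3 * X 4)) := by
  simp [LT_V, pderiv_X, Pi.single_apply, pd3]

lemma hd2 : pderiv (2 : Fin 5) LT_V = X 0 * (3 * X 2 ^ 2) - 3 * (X 1 * (X 3 * X 4)) := by
  simp [LT_V, pderiv_X, Pi.single_apply, pd3]; ring

lemma hd3 : pderiv (3 : Fin 5) LT_V = X 0 * (3 * X 3 ^ 2) - 3 * (X 1 * (X 2 * X 4)) := by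
  simp [LT_V, pderiv_X, Pi.single_apply, pd3]; ring

lemma hd4 : pderiv (4 : Fin 5) LT_V = X 0 * (3 * X 4 ^ 2) - 3 * (X 1 * (X 2 * X 3)) := by
  simp [LT_V, pderiv_X, Pi.single_apply, pd3]

lemma memker (v : Fin 5 → ℂ) (h0 : v 0 = 0) (h1 : v 1 = 0) (h234 : v 2 * v 3 * v 4 = 0)
    (hcube : v 2 ^ 3 + v 3 ^ 3 + v 4 ^ 3 = 0) :
    ∀ p ∈ LT_V_JacobiIdeal, aeval v p = 0 := by
  intro p hp
  rw [LT_V_JacobiIdeal] at hp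
  have : Ideal.span (Set.range fun i : Fin 5 => pderiv i LT_V) ≤
      RingHom.ker (aeval v : MvPolynomial (Fin 5) ℂ →ₐ[ℂ] ℂ).toRingHom := by
    rw [Ideal.span_le]
    rintro q ⟨i, rfl⟩
    fin_cases i <;>
      simp [RingHom.mem_ker, hd0, hd1, hd2, hd3, hd4, h0, h1, h234, hcube]
  exact this hp

noncomputable def LT_fA : (MvPolynomial (Fin 5) ℂ ⧸ LT_V_JacobiIdeal) →ₐ[ℂ] ℂ :=
  Ideal.Quotient.liftₐ LT_V_JacobiIdeal (aeval ![0, 0, 1, -1, 0])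
    (memker _ rfl rfl (by simp) (by simp; norm_num))

noncomputable def LT_fB : (MvPolynomial (Fin 5) ℂ ⧸ LT_V_JacobiIdeal) →ₐ[ℂ] ℂ :=
  Ideal.Quotient.liftₐ LT_V_JacobiIdeal (aeval ![0, 0, 1, 0, -1])
    (memker _ rfl rfl (by simp) (by simp; norm_num))

lemma LT_fA_mk (p : MvPolynomial (Fin 5) ℂ) :
    LT_fA (mk p) = aeval ![(0:ℂ), 0, 1, -1, 0] p := by
  simp only [LT_fA, Ideal.Quotient.liftₐ_apply, Ideal.Quotient.lift_mk, RingHom.coe_coe]; rfl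

lemma LT_fB_mk (p : MvPolynomial (Fin 5) ℂ) :
    LT_fB (mk p) = aeval ![(0:ℂ), 0, 1, 0, -1] p := by
  simp only [LT_fB, Ideal.Quotient.liftₐ_apply, Ideal.Quotient.lift_mk, RingHom.coe_coe]; rfl

theorem stmt13 :
    mk (X 2 ^ 3 + X 3 ^ 3 + X 4 ^ 3) = 0 ∧
    mk (X 2 * X 3 * X 4) = 0 ∧
    LinearIndependent ℂ ![mk (X 2 ^ 3), mk (X 3 ^ 3)] := by
  have hgen : ∀ i : Fin 5, mk (pderiv i LT_V) = 0 := by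
    intro i
    rw [Ideal.Quotient.eq_zero_iff_mem]
    exact Ideal.subset_span ⟨i, rfl⟩
  have e0 : mk (X 2 ^ 3 + X 3 ^ 3 + X 4 ^ 3) = 0 := by rw [← hd0]; exact hgen 0
  have e1 : mk (X 2 * X 3 * X 4) = 0 := by
    have hid : (X 2 * X 3 * X 4 : MvPolynomial (Fin 5) ℂ)
        = C (-1/3) * pderiv (1 : Fin 5) LT_V := by
      rw [hd1, ← map_ofNat (C : ℂ →+* MvPolynomial (Fin 5) ℂ) 3, mul_neg, ← mul_assoc,
        ← C_mul]
      norm_num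
    rw [hid, map_mul, hgen 1, mul_zero]
  refine ⟨e0, e1, ?_⟩
  rw [linearIndependent_fin2]
  constructor
  · intro h
    simp only [Matrix.cons_val_one, Matrix.head_cons, Matrix.cons_val_zero] at h
    have : LT_fA (mk (X 3 ^ 3)) = 0 := by rw [h]; simp
    rw [LT_fA_mk] at this
    simp at this
  · intro a h
    simp only [Matrix.cons_val_one, Matrix.head_cons, Matrix.cons_val_zero] at h
    have hB := congrArg LT_fB h
    rw [map_smul, LT_fB_mk, LT_fB_mk] at hB
    simp at hB
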